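/- Under the same hypotheses (f in K_s(φ)), for |z| = r < 1 one has the lower bound |f'(z)| ≥ m(r)/(1+r²), where m(r) = min_{|ζ|=r} |φ(ζ)|. -/

import Mathlib

/-!
Put `p(z) = -g(z) g(-z) / z²`, so that `f'(z) = φ(w(z)) p(z)`. By the Schwarz lemma `w(z)` lies in
the closed disc of radius `r`, on which `1/φ` is holomorphic, so the maximum principle gives
`|φ(w(z))| ≥ m(r)`. The function `s = 1 + z p'/p = z g'(z)/g(z) + (-z) g'(-z)/g(-z) - 1` is even
with positive real part, so its Cayley transform `(s - 1)/(s + 1)` maps the disc into itself and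
vanishes to second order at `0`; hence `Re s ≥ (1 - |z|²)/(1 + |z|²)`, and integrating
`Re (z p'/p)` along the radius yields `|p(z)| ≥ 1/(1 + |z|²)`.
-/

open Complex Metric Filter Topology Set

theorem Function.Even.deriv_odd {𝕜 F : Type*} [NontriviallyNormedField 𝕜] [NormedAddCommGroup F]
    [NormedSpace 𝕜 F] {f : 𝕜 → F} (hf : f.Even) : (deriv f).Odd := fun x => by
  have hneg : (fun y => f (-y)) = f := funext hf
  simpa [hneg] using deriv_comp_neg f (-x)

namespace Complex

theorem norm_le_sq_of_mapsTo_ball {F : Type*} [NormedAddCommGroup F] [NormedSpace ℂ F]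
    {ψ : ℂ → F} (hd : DifferentiableOn ℂ ψ (ball 0 1))
    (hmaps : MapsTo ψ (ball 0 1) (closedBall 0 1)) (h₀ : ψ 0 = 0) (h₁ : deriv ψ 0 = 0)
    {z : ℂ} (hz : z ∈ ball (0 : ℂ) 1) : ‖ψ z‖ ≤ ‖z‖ ^ 2 := by
  have hderiv : HasDerivAt ψ 0 0 := by
    simpa [h₁] using (hd.differentiableAt (ball_mem_nhds 0 one_pos)).hasDerivAt
  have ho : (ψ · - ψ 0) =o[𝓝 0] (fun w ↦ ‖w - 0‖ ^ 1) := by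
    simpa using (hasDerivAt_iff_isLittleO.1 hderiv).norm_right
  simpa [h₀] using
    dist_le_mul_div_pow_of_mapsTo_ball_of_isLittleO (R₂ := 1) hd (by rwa [h₀]) ho hz

theorem norm_sub_one_lt_norm_add_one {s : ℂ} (hs : 0 < s.re) : ‖s - 1‖ < ‖s + 1‖ := by
  rw [← sq_lt_sq₀ (norm_nonneg _) (norm_nonneg _), Complex.sq_norm, Complex.sq_norm,
    normSq_apply, normSq_apply]
  simp only [sub_re, add_re, sub_im, add_im, one_re, one_im]
  nlinarith

theorem div_le_re_of_norm_sub_one_le {s : ℂ} {a : ℝ} (ha₀ : 0 ≤ a) (ha₁ : a < 1)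
    (h : ‖s - 1‖ ≤ a * ‖s + 1‖) : (1 - a) / (1 + a) ≤ s.re := by
  have hsq : ‖s - 1‖ ^ 2 ≤ a ^ 2 * ‖s + 1‖ ^ 2 := by
    rw [← mul_pow]; exact pow_le_pow_left₀ (norm_nonneg _) h 2
  rw [Complex.sq_norm, Complex.sq_norm, normSq_apply, normSq_apply] at hsq
  simp only [sub_re, add_re, sub_im, add_im, one_re, one_im] at hsq
  rw [div_le_iff₀ (by linarith)]
  by_contra! hlt
  have h₁ : 0 < 1 - s.re - a * (1 + s.re) := by linarith
  have h₂ : 0 < 1 - s.re + a * (1 + s.re) := by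
    rcases le_or_gt s.re (-1) with h | h <;> nlinarith
  nlinarith [mul_nonneg (by nlinarith : (0:ℝ) ≤ 1 - a ^ 2) (sq_nonneg s.im), mul_pos h₁ h₂]

theorem div_le_re_of_even_of_re_pos {s : ℂ → ℂ} (hd : DifferentiableOn ℂ s (ball 0 1))
    (heven : s.Even) (h₀ : s 0 = 1) (hre : ∀ z ∈ ball (0 : ℂ) 1, 0 < (s z).re)
    {z : ℂ} (hz : z ∈ ball (0 : ℂ) 1) : (1 - ‖z‖ ^ 2) / (1 + ‖z‖ ^ 2) ≤ (s z).re := by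
  have hs₁ : ∀ z ∈ ball (0 : ℂ) 1, s z + 1 ≠ 0 := fun z hz h => by
    have := congrArg re h
    rw [add_re, one_re, zero_re] at this
    linarith [hre z hz]
  set ψ : ℂ → ℂ := fun z => (s z - 1) / (s z + 1)
  have hψd : DifferentiableOn ℂ ψ (ball 0 1) := (hd.sub_const 1).div (hd.add_const 1) hs₁
  have hψmaps : MapsTo ψ (ball 0 1) (closedBall 0 1) := fun z hz => by
    rw [mem_closedBall_zero_iff, norm_div]
    exact div_le_one_of_le₀ (norm_sub_one_lt_norm_add_one (hre z hz)).le (norm_nonneg _)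
  have hψ₀ : ψ 0 = 0 := by simp [ψ, h₀]
  have hψ₁ : deriv ψ 0 = 0 := (heven.left_comp fun w => (w - 1) / (w + 1)).deriv_odd.map_zero
  have hz₁ : ‖z‖ ^ 2 < 1 := by
    have := mem_ball_zero_iff.1 hz
    nlinarith [norm_nonneg z]
  refine div_le_re_of_norm_sub_one_le (by positivity) hz₁ ?_
  calc ‖s z - 1‖ = ‖ψ z‖ * ‖s z + 1‖ := by
        rw [← norm_mul, div_mul_cancel₀ _ (hs₁ z hz)]
    _ ≤ ‖z‖ ^ 2 * ‖s z + 1‖ := by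
        gcongr; exact norm_le_sq_of_mapsTo_ball hψd hψmaps hψ₀ hψ₁ hz

theorem real_inner_eq_sq_norm_mul_re_div (a b : ℂ) : inner ℝ a b = ‖a‖ ^ 2 * (b / a).re := by
  rcases eq_or_ne a 0 with rfl | ha
  · simp
  rw [Complex.inner, div_re, Complex.sq_norm, mul_re, conj_re, conj_im]
  field_simp [(normSq_pos.2 ha).ne']
  ring

theorem one_div_le_norm_of_div_le_re_logDeriv {p : ℂ → ℂ}
    (hd : DifferentiableOn ℂ p (ball 0 1)) (h₀ : p 0 = 1)
    (hlog : ∀ z ∈ ball (0 : ℂ) 1, (1 - ‖z‖ ^ 2) / (1 + ‖z‖ ^ 2) ≤ (1 + z * deriv p z / p z).re)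
    {z : ℂ} (hz : z ∈ ball (0 : ℂ) 1) : 1 / (1 + ‖z‖ ^ 2) ≤ ‖p z‖ := by
  set r := ‖z‖
  have hmem : ∀ t ∈ Icc (0 : ℝ) 1, (t : ℂ) * z ∈ ball (0 : ℂ) 1 := fun t ht => by
    rw [mem_ball_zero_iff, norm_mul, norm_real, Real.norm_of_nonneg ht.1]
    exact (mul_le_of_le_one_left (norm_nonneg z) ht.2).trans_lt (mem_ball_zero_iff.1 hz)
  -- `v` is nondecreasing on `[0, 1]`, from `v 0 = 1` to `v 1 = (‖p z‖ * (1 + r ^ 2)) ^ 2`.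
  set v : ℝ → ℝ := fun t => ‖p (t * z)‖ ^ 2 * (1 + t ^ 2 * r ^ 2) ^ 2
  have hv : ∀ t ∈ Icc (0 : ℝ) 1, HasDerivAt v
      (2 * inner ℝ (p (t * z)) (deriv p (t * z) * z) * (1 + t ^ 2 * r ^ 2) ^ 2 +
        ‖p (t * z)‖ ^ 2 * (2 * (1 + t ^ 2 * r ^ 2) * (2 * t * r ^ 2))) t := fun t ht => by
    have hp : HasDerivAt (fun s : ℝ => p (s * z)) (deriv p (t * z) * z) t :=
      (((hd.differentiableAt (isOpen_ball.mem_nhds (hmem t ht))).hasDerivAt).comp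
        (t : ℂ) (hasDerivAt_mul_const z)).comp_ofReal
    have hq : HasDerivAt (fun s : ℝ => (1 + s ^ 2 * r ^ 2) ^ 2)
        (2 * (1 + t ^ 2 * r ^ 2) * (2 * t * r ^ 2)) t :=
      ((((hasDerivAt_pow 2 t).mul_const (r ^ 2)).const_add 1).pow 2).congr_deriv (by norm_num)
    exact hp.norm_sq.mul hq
  have hmono : MonotoneOn v (Icc 0 1) := by
    refine monotoneOn_of_deriv_nonneg (convex_Icc 0 1)
      (fun t ht => (hv t ht).continuousAt.continuousWithinAt)
      (fun t ht => (hv t (interior_subset ht)).differentiableAt.differentiableWithinAt)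
      fun t ht => ?_
    rw [interior_Icc] at ht
    have ht' := Ioo_subset_Icc_self ht
    rw [(hv t ht').deriv, real_inner_eq_sq_norm_mul_re_div]
    have hbound := hlog _ (hmem t ht')
    have hre : ((t : ℂ) * z * deriv p (t * z) / p (t * z)).re
        = t * (deriv p (t * z) * z / p (t * z)).re := by
      rw [← re_ofReal_mul]; congr 1; ring
    rw [norm_mul, norm_real, Real.norm_of_nonneg ht'.1, mul_pow, add_re, one_re, hre,
      div_le_iff₀ (by positivity)] at hbound
    have hL : 0 ≤ (deriv p (t * z) * z / p (t * z)).re * (1 + t ^ 2 * r ^ 2) + 2 * t * r ^ 2 := by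
      nlinarith [ht.1]
    nlinarith [mul_nonneg (mul_nonneg (sq_nonneg ‖p (t * z)‖) hL)
      (by positivity : (0:ℝ) ≤ 2 * (1 + t ^ 2 * r ^ 2))]
  have hv01 := hmono (left_mem_Icc.2 zero_le_one) (right_mem_Icc.2 zero_le_one) zero_le_one
  simp only [v, ofReal_zero, zero_mul, h₀, ofReal_one, one_mul] at hv01
  norm_num at hv01
  rw [div_le_iff₀ (by positivity)]
  nlinarith [mul_nonneg (norm_nonneg (p z)) (by positivity : (0:ℝ) ≤ 1 + r ^ 2)]

theorem one_div_le_norm_of_even_of_re_pos {p : ℂ → ℂ} (hd : DifferentiableOn ℂ p (ball 0 1))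
    (heven : p.Even) (hne : ∀ z ∈ ball (0 : ℂ) 1, p z ≠ 0) (h₀ : p 0 = 1)
    (hre : ∀ z ∈ ball (0 : ℂ) 1, 0 < (1 + z * deriv p z / p z).re)
    {z : ℂ} (hz : z ∈ ball (0 : ℂ) 1) : 1 / (1 + ‖z‖ ^ 2) ≤ ‖p z‖ := by
  have hsd : DifferentiableOn ℂ (fun z => 1 + z * deriv p z / p z) (ball 0 1) :=
    ((differentiableOn_id.mul (hd.deriv isOpen_ball)).div hd hne).const_add 1
  have hseven : Function.Even (fun z => 1 + z * deriv p z / p z) := fun z => by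
    simp only [heven.deriv_odd z, heven z]
    ring
  exact one_div_le_norm_of_div_le_re_logDeriv hd h₀
    (fun z hz => div_le_re_of_even_of_re_pos hsd hseven (by simp) hre hz) hz

theorem le_norm_of_forall_sphere_le {φ : ℂ → ℂ} {c : ℂ} {r m : ℝ}
    (hd : DifferentiableOn ℂ φ (closedBall c r)) (hne : ∀ ζ ∈ closedBall c r, φ ζ ≠ 0)
    (hm : ∀ ζ ∈ sphere c r, m ≤ ‖φ ζ‖) {ζ : ℂ} (hζ : ζ ∈ closedBall c r) : m ≤ ‖φ ζ‖ := by
  rcases le_or_gt m 0 with hm₀ | hm₀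
  · exact hm₀.trans (norm_nonneg _)
  have hinv : DifferentiableOn ℂ (fun ζ => (φ ζ)⁻¹) (closedBall c r) := hd.inv hne
  have hcl : DiffContOnCl ℂ (fun ζ => (φ ζ)⁻¹) (closedBall c r) :=
    ⟨hinv, by rw [closure_closedBall]; exact hinv.continuousOn⟩
  have hle : ‖(φ ζ)⁻¹‖ ≤ m⁻¹ := by
    refine norm_le_of_forall_mem_frontier_norm_le isBounded_closedBall hcl (fun ζ' hζ' => ?_)
      (subset_closure hζ)
    rw [frontier_closedBall'] at hζ'
    rw [norm_inv]
    exact inv_anti₀ hm₀ (hm ζ' hζ')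
  rwa [norm_inv, inv_le_inv₀ (norm_pos_iff.2 (hne ζ hζ)) hm₀] at hle

end Complex

def IsStarlikeOfOrder (α : ℝ) (g : ℂ → ℂ) : Prop :=
  ∀ z ∈ ball (0 : ℂ) 1, z ≠ 0 → α < (z * deriv g z / g z).re

theorem IsStarlikeOfOrder.apply_ne_zero {α : ℝ} {g : ℂ → ℂ} (hg : IsStarlikeOfOrder α g)
    (hα : 0 ≤ α) {z : ℂ} (hz : z ∈ ball 0 1) (hz₀ : z ≠ 0) : g z ≠ 0 := fun hgz => by
  have := hg z hz hz₀
  simp only [hgz, div_zero, zero_re] at this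
  linarith

/-- The `p` of the proof sketch when `g 0 = 0`, written through slopes so that it is holomorphic
at `0`. -/
noncomputable def dslopeProd (g : ℂ → ℂ) (z : ℂ) : ℂ := dslope g 0 z * dslope g 0 (-z)

section dslopeProd

variable {g : ℂ → ℂ} {R : ℝ} {z : ℂ}

theorem dslopeProd_even (g : ℂ → ℂ) : (dslopeProd g).Even := fun z => by
  simp [dslopeProd, mul_comm]

theorem dslopeProd_zero (g : ℂ → ℂ) : dslopeProd g 0 = deriv g 0 ^ 2 := by
  simp [dslopeProd, sq]

theorem dslopeProd_of_ne_zero (hg₀ : g 0 = 0) (hz : z ≠ 0) :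
    dslopeProd g z = -(g z * g (-z)) / z ^ 2 := by
  simp only [dslopeProd, dslope_of_ne _ hz, dslope_of_ne _ (neg_ne_zero.2 hz), slope_def_field,
    hg₀, sub_zero]
  field_simp

theorem differentiableOn_dslopeProd (hg : DifferentiableOn ℂ g (ball 0 R)) :
    DifferentiableOn ℂ (dslopeProd g) (ball 0 R) := by
  have hs : DifferentiableOn ℂ (dslope g 0) (ball 0 R) := by
    rcases le_or_gt R 0 with hR | hR
    · rw [ball_eq_empty.2 hR]; exact differentiableOn_empty
    exact (differentiableOn_dslope (ball_mem_nhds 0 hR)).2 hg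
  exact hs.mul (hs.comp (differentiableOn_neg _) fun x hx => by simpa using hx)

theorem one_add_logDeriv_dslopeProd (hg : DifferentiableOn ℂ g (ball 0 R)) (hg₀ : g 0 = 0)
    (hz : z ∈ ball 0 R) (hz₀ : z ≠ 0) (hgz : g z ≠ 0) (hgz' : g (-z) ≠ 0) :
    1 + z * deriv (dslopeProd g) z / dslopeProd g z =
      z * deriv g z / g z + -z * deriv g (-z) / g (-z) - 1 := by
  have hz' : -z ∈ ball (0 : ℂ) R := by simpa using hz
  have h₁ : HasDerivAt g (deriv g z) z := (hg.differentiableAt (isOpen_ball.mem_nhds hz)).hasDerivAt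
  have h₂ : HasDerivAt (fun x => g (-x)) (-deriv g (-z)) z := by
    simpa [Function.comp_def] using
      ((hg.differentiableAt (isOpen_ball.mem_nhds hz')).hasDerivAt).comp z (hasDerivAt_neg z)
  have hderiv : HasDerivAt (dslopeProd g)
      ((-(deriv g z * g (-z) + g z * -deriv g (-z)) * z ^ 2 - -(g z * g (-z)) * (2 * z)) /
        (z ^ 2) ^ 2) z := by
    refine ((h₁.mul h₂).neg.div ((hasDerivAt_pow 2 z).congr_deriv (by ring))
      (pow_ne_zero 2 hz₀)).congr_of_eventuallyEq ?_
    filter_upwards [eventually_ne_nhds hz₀] with x hx using dslopeProd_of_ne_zero hg₀ hx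
  rw [hderiv.deriv, dslopeProd_of_ne_zero hg₀ hz₀]
  field_simp
  ring

theorem dslopeProd_ne_zero (hg₀ : g 0 = 0) (hg₁ : deriv g 0 ≠ 0)
    (hgne : ∀ x ∈ ball (0 : ℂ) 1, x ≠ 0 → g x ≠ 0) (hz : z ∈ ball 0 1) : dslopeProd g z ≠ 0 := by
  rcases eq_or_ne z 0 with rfl | hz₀
  · simpa [dslopeProd_zero] using hg₁
  rw [dslopeProd_of_ne_zero hg₀ hz₀]
  exact div_ne_zero (neg_ne_zero.2 (mul_ne_zero (hgne z hz hz₀)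
    (hgne (-z) (by simpa using hz) (neg_ne_zero.2 hz₀)))) (pow_ne_zero 2 hz₀)

theorem re_one_add_logDeriv_dslopeProd_pos (hg : DifferentiableOn ℂ g (ball 0 1))
    (hg₀ : g 0 = 0) (hstar : IsStarlikeOfOrder (1 / 2) g) (hz : z ∈ ball 0 1) :
    0 < (1 + z * deriv (dslopeProd g) z / dslopeProd g z).re := by
  rcases eq_or_ne z 0 with rfl | hz₀
  · simp
  have hz' : -z ∈ ball (0 : ℂ) 1 := by simpa using hz
  have hz₀' : -z ≠ 0 := neg_ne_zero.2 hz₀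
  rw [one_add_logDeriv_dslopeProd hg hg₀ hz hz₀ (hstar.apply_ne_zero (by norm_num) hz hz₀)
    (hstar.apply_ne_zero (by norm_num) hz' hz₀'), sub_re, add_re, one_re]
  linarith [hstar z hz hz₀, hstar (-z) hz' hz₀']

theorem one_div_le_norm_dslopeProd (hg : DifferentiableOn ℂ g (ball 0 1)) (hg₀ : g 0 = 0)
    (hg₁ : deriv g 0 = 1) (hstar : IsStarlikeOfOrder (1 / 2) g) (hz : z ∈ ball 0 1) :
    1 / (1 + ‖z‖ ^ 2) ≤ ‖dslopeProd g z‖ :=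
  one_div_le_norm_of_even_of_re_pos (differentiableOn_dslopeProd hg) (dslopeProd_even g)
    (fun _ hx => dslopeProd_ne_zero hg₀ (by simp [hg₁])
      (fun _ hy hy₀ => hstar.apply_ne_zero (by norm_num) hy hy₀) hx)
    (by simp [dslopeProd_zero, hg₁])
    (fun _ hx => re_one_add_logDeriv_dslopeProd_pos hg hg₀ hstar hx) hz

theorem deriv_eq_mul_dslopeProd {f w φ : ℂ → ℂ} (hf : DifferentiableOn ℂ f (ball 0 1))
    (hg : DifferentiableOn ℂ g (ball 0 1)) (hg₀ : g 0 = 0)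
    (hgne : ∀ z ∈ ball (0:ℂ) 1, z ≠ 0 → g z ≠ 0) (hφw : ContinuousAt (fun z => φ (w z)) 0)
    (hsub : ∀ z ∈ ball (0:ℂ) 1, z ≠ 0 → -(z ^ 2 * deriv f z) / (g z * g (-z)) = φ (w z))
    (hz : z ∈ ball 0 1) : deriv f z = φ (w z) * dslopeProd g z := by
  have hpunct : ∀ z ∈ ball (0 : ℂ) 1, z ≠ 0 → deriv f z = φ (w z) * dslopeProd g z := by
    intro z hz hz₀
    have hgz := hgne z hz hz₀
    have hgz' := hgne (-z) (by simpa using hz) (neg_ne_zero.2 hz₀)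
    rw [dslopeProd_of_ne_zero hg₀ hz₀, ← hsub z hz hz₀]
    field_simp
  rcases eq_or_ne z 0 with rfl | hz₀
  · have hball : ball (0 : ℂ) 1 ∈ 𝓝 0 := ball_mem_nhds 0 one_pos
    have hcf : ContinuousAt (deriv f) 0 :=
      ((hf.deriv isOpen_ball).differentiableAt hball).continuousAt
    have hcg : ContinuousAt (fun z => φ (w z) * dslopeProd g z) 0 :=
      hφw.mul ((differentiableOn_dslopeProd hg).continuousOn.continuousAt hball)
    have heq : deriv f =ᶠ[𝓝[≠] 0] fun z => φ (w z) * dslopeProd g z := by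
      filter_upwards [nhdsWithin_le_nhds hball, self_mem_nhdsWithin] with z hz hz₀
        using hpunct z hz hz₀
    exact ((hcf.eventuallyEq_nhds_iff_eventuallyEq_nhdsNE hcg).1 heq).eq_of_nhds
  · exact hpunct z hz hz₀

end dslopeProd

theorem distortion_lower_Ks_general (f g w φ : ℂ → ℂ)
    (hf : AnalyticOnNhd ℂ f (ball (0:ℂ) 1))
    (hg : AnalyticOnNhd ℂ g (ball (0:ℂ) 1)) (hg0 : g 0 = 0) (hg1 : deriv g 0 = 1)
    (hstar : ∀ z ∈ ball (0:ℂ) 1, z ≠ 0 → 1 / 2 < (z * deriv g z / g z).re)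
    (hw : AnalyticOnNhd ℂ w (ball (0:ℂ) 1)) (hw0 : w 0 = 0)
    (hwb : ∀ z ∈ ball (0:ℂ) 1, ‖w z‖ < 1)
    (hφ : AnalyticOnNhd ℂ φ (ball (0:ℂ) 1)) (hφre : ∀ z ∈ ball (0:ℂ) 1, 0 < (φ z).re)
    (hsub : ∀ z ∈ ball (0:ℂ) 1, z ≠ 0 →
      -(z ^ 2 * deriv f z) / (g z * g (-z)) = φ (w z))
    (r : ℝ) (hr : r < 1) (z : ℂ) (hz : ‖z‖ = r)
    (m : ℝ) (hm : IsLeast {x : ℝ | ∃ ζ : ℂ, ‖ζ‖ = r ∧ x = ‖φ ζ‖} m) :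
    m / (1 + r ^ 2) ≤ ‖deriv f z‖ := by
  have hz₁ : z ∈ ball (0 : ℂ) 1 := mem_ball_zero_iff.2 (hz ▸ hr)
  have hrb : closedBall (0 : ℂ) r ⊆ ball 0 1 := closedBall_subset_ball hr
  have hwz : w z ∈ closedBall (0 : ℂ) r := by
    rw [mem_closedBall_zero_iff, ← hz]
    exact norm_le_norm_of_mapsTo_ball hw.differentiableOn
      (fun x hx => mem_closedBall_zero_iff.2 (hwb x hx).le) hw0 (hz ▸ hr)
  have hφw : m ≤ ‖φ (w z)‖ :=
    le_norm_of_forall_sphere_le (hφ.differentiableOn.mono hrb)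
      (fun ζ hζ hφζ => by simpa [hφζ] using hφre ζ (hrb hζ))
      (fun ζ hζ => hm.2 ⟨ζ, mem_sphere_zero_iff_norm.1 hζ, rfl⟩) hwz
  have hp : 1 / (1 + r ^ 2) ≤ ‖dslopeProd g z‖ :=
    hz ▸ one_div_le_norm_dslopeProd hg.differentiableOn hg0 hg1 hstar hz₁
  have hφw_cont : ContinuousAt (fun z => φ (w z)) 0 :=
    (hφ (w 0) (by simp [hw0])).continuousAt.comp (hw 0 (by simp)).continuousAt
  have hgne : ∀ x ∈ ball (0 : ℂ) 1, x ≠ 0 → g x ≠ 0 := fun _ hx hx₀ =>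
    IsStarlikeOfOrder.apply_ne_zero hstar (by norm_num) hx hx₀
  rw [deriv_eq_mul_dslopeProd hf.differentiableOn hg.differentiableOn hg0 hgne hφw_cont hsub hz₁,
    norm_mul, div_eq_mul_one_div]
  exact mul_le_mul hφw hp (by positivity) (norm_nonneg _)

theorem distortion_lower_Ks (f g w φ : ℂ → ℂ)
    (hf : AnalyticOnNhd ℂ f (ball (0:ℂ) 1)) (hf0 : f 0 = 0) (hf1 : deriv f 0 = 1)
    (hg : AnalyticOnNhd ℂ g (ball (0:ℂ) 1)) (hg0 : g 0 = 0) (hg1 : deriv g 0 = 1)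
    (hstar : ∀ z ∈ ball (0:ℂ) 1, z ≠ 0 → 1 / 2 < (z * deriv g z / g z).re)
    (hw : AnalyticOnNhd ℂ w (ball (0:ℂ) 1)) (hw0 : w 0 = 0)
    (hwb : ∀ z ∈ ball (0:ℂ) 1, ‖w z‖ < 1)
    (hφ : AnalyticOnNhd ℂ φ (ball (0:ℂ) 1)) (hφre : ∀ z ∈ ball (0:ℂ) 1, 0 < (φ z).re)
    (hsub : ∀ z ∈ ball (0:ℂ) 1, z ≠ 0 →
      -(z ^ 2 * deriv f z) / (g z * g (-z)) = φ (w z))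
    (r : ℝ) (hr : r < 1) (z : ℂ) (hz : ‖z‖ = r)
    (m : ℝ) (hm : IsLeast {x : ℝ | ∃ ζ : ℂ, ‖ζ‖ = r ∧ x = ‖φ ζ‖} m) :
    m / (1 + r ^ 2) ≤ ‖deriv f z‖ :=
  distortion_lower_Ks_general f g w φ hf hg hg0 hg1 hstar hw hw0 hwb hφ hφre hsub r hr z hz m hm
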